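/- arXiv:2511.15595 — 4 statements merged into one kernel-verified Lean document; each statement's English description precedes it below -/
import Mathlib

section
/- For the sequence (n_k)_{k≥1} constructed from blocks Δ_i and sub-blocks Δ_i^{(m)} via n_k := 2^{2^{2^{2^i}}}·(2^{k+i·m} + m) for k ∈ Δ_i^{(m)}, one has liminf_{k→∞} n_{k+1}/n_k = 2; in particular (n_k) is a lacunary sequence. -/
/-!
Write `n_k = C_i (2^{e_k} + m)` with `C_i = 2^{2^{2^{2^i}}}` and `e_k = k + i m`. Inside a
sub-block the exponent grows by one, so `n_{k+1}/n_k = 2 - m/(2^{e_k} + m)`: this is at most `2`,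
and at least `2 - 4k³/2^k` because `m ≤ #Δ_i ≤ 4k³` (the block starts satisfy
`b_{i+1} = 4 b_i³`). Passing to the next sub-block raises the exponent by at least `i + 1`, and
passing to the next block multiplies by the huge factor `C_{i+1}/C_i`; both at least double the
term. So eventually `n_{k+1}/n_k ≥ 2 - 4k³/2^k → 2`. Since `#Δ_i / M(i) → ∞`, the first sub-block
of every late block holds two consecutive indices, so the ratio is `≤ 2` infinitely often; hence
the liminf is `2`, and the ratio is eventually at least `3/2`.
-/

open Filter

/-- The block `Δ_i = {2^{3^i−1}, …, 2^{3^{i+1}−1} − 1}`. -/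
def Blk (i : ℕ) : Finset ℕ := Finset.Ico (2^(3^i - 1)) (2^(3^(i+1) - 1))

/-- `M(i) = ⌈g(#Δ_i)⌉`. -/
noncomputable def Mblk (g : ℕ → ℝ) (i : ℕ) : ℕ := ⌈g ((Blk i).card)⌉₊

open Finset Topology

lemma liminf_eq_of_tendsto_of_frequently_le {α β : Type*} [ConditionallyCompleteLinearOrder α]
    [TopologicalSpace α] [OrderTopology α] {f : Filter β} [f.NeBot] {u b : β → α} {a : α}
    (hb : Tendsto b f (𝓝 a)) (hbu : ∀ᶠ x in f, b x ≤ u x) (hua : ∃ᶠ x in f, u x ≤ a) :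
    liminf u f = a :=
  le_antisymm (liminf_le_of_frequently_le hua (hb.isBoundedUnder_ge.mono_ge hbu))
    (hb.liminf_eq ▸ liminf_le_liminf hbu hb.isBoundedUnder_ge (.of_frequently_le hua))

def blockStart (i : ℕ) : ℕ := 2 ^ (3 ^ i - 1)

lemma mem_Blk_iff {i k : ℕ} : k ∈ Blk i ↔ blockStart i ≤ k ∧ k < blockStart (i + 1) :=
  mem_Ico

lemma blockStart_succ (i : ℕ) : blockStart (i + 1) = 4 * blockStart i ^ 3 := by
  have h : 3 ^ (i + 1) - 1 = 3 * (3 ^ i - 1) + 2 := by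
    have := Nat.one_le_pow i 3 (by norm_num)
    rw [pow_succ]
    omega
  rw [blockStart, blockStart, h]
  ring

lemma one_le_blockStart (i : ℕ) : 1 ≤ blockStart i := Nat.one_le_two_pow

lemma blockStart_strictMono : StrictMono blockStart :=
  strictMono_nat_of_lt_succ fun i => by
    have := one_le_blockStart i
    have := Nat.le_self_pow (by norm_num : 3 ≠ 0) (blockStart i)
    rw [blockStart_succ]
    omega

lemma exists_mem_Blk {k : ℕ} (hk : 1 ≤ k) : ∃ i, k ∈ Blk i := by
  classical
  have hex : ∃ i, k < blockStart (i + 1) :=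
    ⟨k, Nat.lt_succ_self k |>.trans_le (blockStart_strictMono.id_le (k + 1))⟩
  refine ⟨Nat.find hex, mem_Blk_iff.2 ⟨?_, Nat.find_spec hex⟩⟩
  rcases h : Nat.find hex with _ | i
  · exact hk
  · exact not_lt.1 (Nat.find_min hex (by omega : i < Nat.find hex))

lemma succ_mem_Blk_succ {i k : ℕ} (hk : k ∈ Blk i) (hk' : k + 1 ∉ Blk i) : k + 1 ∈ Blk (i + 1) := by
  rw [mem_Blk_iff] at *
  have := blockStart_strictMono (show i + 1 < i + 1 + 1 by omega)
  omega

lemma one_le_of_mem_Blk {i k : ℕ} (hk : k ∈ Blk i) (h4 : 4 ≤ k) : 1 ≤ i := by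
  rcases Nat.eq_zero_or_pos i with rfl | hi
  · have := (mem_Blk_iff.1 hk).2
    norm_num [blockStart] at this
    omega
  · exact hi

lemma card_Blk (i : ℕ) : #(Blk i) = blockStart (i + 1) - blockStart i := Nat.card_Ico _ _

lemma blockStart_le_card_Blk (i : ℕ) : blockStart i ≤ #(Blk i) := by
  have := Nat.le_self_pow (by norm_num : 3 ≠ 0) (blockStart i)
  rw [card_Blk, blockStart_succ]
  omega

lemma one_le_card_Blk (i : ℕ) : 1 ≤ #(Blk i) :=
  (one_le_blockStart i).trans (blockStart_le_card_Blk i)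

lemma tendsto_card_Blk : Tendsto (fun i => #(Blk i)) atTop atTop :=
  tendsto_atTop_mono (fun i => (blockStart_strictMono.id_le i).trans (blockStart_le_card_Blk i))
    tendsto_id

lemma card_Blk_le_four_mul_pow_three {i k : ℕ} (hk : k ∈ Blk i) : #(Blk i) ≤ 4 * k ^ 3 := by
  have := Nat.pow_le_pow_left (mem_Blk_iff.1 hk).1 3
  rw [card_Blk, blockStart_succ]
  omega

lemma card_Blk_le_two_pow (i : ℕ) : #(Blk i) ≤ 2 ^ 3 ^ (i + 1) := by
  rw [card_Blk]
  exact (Nat.sub_le _ _).trans (Nat.pow_le_pow_right two_pos (Nat.sub_le _ _))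

lemma Mblk_le_card_Blk {g : ℕ → ℝ} (hg : ∀ N : ℕ, 1 ≤ N → 1 ≤ g N ∧ g N ≤ N) (i : ℕ) :
    Mblk g i ≤ #(Blk i) :=
  Nat.ceil_le.2 (hg _ (one_le_card_Blk i)).2

lemma eventually_two_mul_Mblk_lt_card_Blk {g : ℕ → ℝ}
    (hg : ∀ N : ℕ, 1 ≤ N → 1 ≤ g N ∧ g N ≤ N)
    (hg_ratio : Tendsto (fun N : ℕ => (N : ℝ) / g N) atTop atTop) :
    ∀ᶠ i in atTop, 2 * Mblk g i < #(Blk i) := by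
  filter_upwards [(hg_ratio.comp tendsto_card_Blk).eventually_ge_atTop 4] with i hi
  have hg1 := (hg _ (one_le_card_Blk i)).1
  have hceil : (Mblk g i : ℝ) < g #(Blk i) + 1 := Nat.ceil_lt_add_one (by linarith)
  have hN : 4 * g #(Blk i) ≤ #(Blk i) := (le_div_iff₀ (by linarith)).1 hi
  exact_mod_cast (by linarith : (2 * Mblk g i : ℝ) < #(Blk i))

structure IsConsecutiveEquipartition (M : ℕ → ℕ) (blk : ℕ → ℕ → Finset ℕ) : Prop where
  mem_Blk_iff_exists : ∀ i k, k ∈ Blk i ↔ ∃ m ∈ Icc 1 (M i), k ∈ blk i m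
  lt_of_lt : ∀ i m m', m < m' → ∀ k ∈ blk i m, ∀ k' ∈ blk i m', k < k'
  card_le_card_add_one : ∀ i, ∀ m ∈ Icc 1 (M i), ∀ m' ∈ Icc 1 (M i), #(blk i m) ≤ #(blk i m') + 1

namespace IsConsecutiveEquipartition

variable {M : ℕ → ℕ} {blk : ℕ → ℕ → Finset ℕ}

lemma subset_Blk (hP : IsConsecutiveEquipartition M blk) {i m : ℕ} (hm : m ∈ Icc 1 (M i)) :
    blk i m ⊆ Blk i :=
  fun k hk => (hP.mem_Blk_iff_exists i k).2 ⟨m, hm, hk⟩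

lemma one_le (hP : IsConsecutiveEquipartition M blk) (i : ℕ) : 1 ≤ M i := by
  obtain ⟨m, hm, -⟩ := (hP.mem_Blk_iff_exists i _).1
    (mem_Blk_iff.2 ⟨le_rfl, blockStart_strictMono (Nat.lt_succ_self i)⟩)
  exact (mem_Icc.1 hm).1.trans (mem_Icc.1 hm).2

lemma two_le_card (hP : IsConsecutiveEquipartition M blk) {i m : ℕ}
    (hM : 2 * M i < #(Blk i)) (hm : m ∈ Icc 1 (M i)) : 2 ≤ #(blk i m) := by
  by_contra! h
  have hcover : #(Blk i) ≤ ∑ m' ∈ Icc 1 (M i), #(blk i m') :=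
    (card_le_card fun k hk => mem_biUnion.2 ((hP.mem_Blk_iff_exists i k).1 hk)).trans
      card_biUnion_le
  have hsmall : ∑ m' ∈ Icc 1 (M i), #(blk i m') ≤ ∑ m' ∈ Icc 1 (M i), 2 :=
    sum_le_sum fun m' hm' => by have := hP.card_le_card_add_one i m' hm' m hm; omega
  simp only [sum_const, Nat.card_Icc, smul_eq_mul] at hsmall
  omega

lemma exists_add_one_mem (hP : IsConsecutiveEquipartition M blk) {i m : ℕ}
    (hm : m ∈ Icc 1 (M i)) (h2 : 2 ≤ #(blk i m)) : ∃ k ∈ blk i m, k + 1 ∈ blk i m := by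
  obtain ⟨a, ha, b, hb, hab⟩ := one_lt_card.1 h2
  wlog hlt : a < b generalizing a b
  · exact this b hb a ha hab.symm (by omega)
  have ha1 : a + 1 ∈ Blk i := by
    have := mem_Blk_iff.1 (hP.subset_Blk hm ha)
    have := mem_Blk_iff.1 (hP.subset_Blk hm hb)
    exact mem_Blk_iff.2 (by omega)
  obtain ⟨m', hm', ha1m'⟩ := (hP.mem_Blk_iff_exists i _).1 ha1
  rcases lt_trichotomy m m' with h | rfl | h
  · exact absurd (hP.lt_of_lt i m m' h b hb _ ha1m') (by omega)
  · exact ⟨a, ha, ha1m'⟩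
  · exact absurd (hP.lt_of_lt i m' m h _ ha1m' a ha) (by omega)

lemma succ_mem_cases (hP : IsConsecutiveEquipartition M blk) {i m k : ℕ}
    (hm : m ∈ Icc 1 (M i)) (hk : k ∈ blk i m) :
    k + 1 ∈ blk i m ∨ (∃ m' ∈ Icc 1 (M i), m < m' ∧ k + 1 ∈ blk i m') ∨
      ∃ m' ∈ Icc 1 (M (i + 1)), k + 1 ∈ blk (i + 1) m' := by
  by_cases hk' : k + 1 ∈ Blk i
  · obtain ⟨m', hm', hkm'⟩ := (hP.mem_Blk_iff_exists i _).1 hk'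
    rcases lt_trichotomy m m' with h | rfl | h
    · exact .inr (.inl ⟨m', hm', h, hkm'⟩)
    · exact .inl hkm'
    · exact absurd (hP.lt_of_lt i m' m h _ hkm' k hk) (by omega)
  · exact .inr (.inr ((hP.mem_Blk_iff_exists _ _).1 (succ_mem_Blk_succ (hP.subset_Blk hm hk) hk')))

end IsConsecutiveEquipartition

def lacunaryTerm (i m k : ℕ) : ℕ := 2 ^ 2 ^ 2 ^ 2 ^ i * (2 ^ (k + i * m) + m)

lemma lacunaryTerm_pos (i m k : ℕ) : 0 < lacunaryTerm i m k := by
  unfold lacunaryTerm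
  positivity

lemma le_two_pow_add_mul {i : ℕ} (hi : 1 ≤ i) (m k : ℕ) : m ≤ 2 ^ (k + i * m) :=
  Nat.lt_two_pow_self.le.trans (Nat.pow_le_pow_right two_pos (by nlinarith))

lemma lacunaryTerm_succ_le (i m k : ℕ) : lacunaryTerm i m (k + 1) ≤ 2 * lacunaryTerm i m k := by
  unfold lacunaryTerm
  rw [show k + 1 + i * m = k + i * m + 1 by ring, pow_succ, mul_left_comm]
  exact Nat.mul_le_mul_left _ (by omega)

lemma two_sub_mul_le_lacunaryTerm_succ (i m k : ℕ) :
    (2 - m / 2 ^ k : ℝ) * lacunaryTerm i m k ≤ lacunaryTerm i m (k + 1) := by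
  have hA : (2 : ℝ) ^ k ≤ 2 ^ (k + i * m) := pow_le_pow_right₀ one_le_two (by omega)
  have hm : (m : ℝ) ≤ m / 2 ^ k * 2 ^ (k + i * m) := by
    rw [div_mul_eq_mul_div, le_div_iff₀ (by positivity)]
    exact mul_le_mul_of_nonneg_left hA (Nat.cast_nonneg m)
  have hxm : (0 : ℝ) ≤ m / 2 ^ k * m := by positivity
  simp only [lacunaryTerm]
  push_cast
  rw [show k + 1 + i * m = k + i * m + 1 by ring, pow_succ, mul_left_comm]
  exact mul_le_mul_of_nonneg_left (by nlinarith) (by positivity)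

lemma two_mul_lacunaryTerm_le_of_lt {i m m' : ℕ} (hi : 1 ≤ i) (h : m < m') (k : ℕ) :
    2 * lacunaryTerm i m k ≤ lacunaryTerm i m' (k + 1) := by
  have hmA := le_two_pow_add_mul hi m k
  have hA : 2 ^ (k + i * m) * 4 ≤ 2 ^ (k + 1 + i * m') := by
    rw [show 4 = 2 ^ 2 by rfl, ← pow_add]
    exact Nat.pow_le_pow_right two_pos (by nlinarith)
  unfold lacunaryTerm
  rw [mul_left_comm]
  exact Nat.mul_le_mul_left _ (by omega)

lemma add_le_four_pow (n : ℕ) : n + 3 ^ n ≤ 4 ^ n := by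
  induction n with
  | zero => norm_num
  | succ n ih =>
    have := Nat.one_le_pow n 3 (by norm_num)
    rw [pow_succ, pow_succ]
    omega

lemma two_pow_add_two_pow_le {a b c : ℕ} (ha : a < c) (hb : b < c) : 2 ^ a + 2 ^ b ≤ 2 ^ c := by
  have ha' : 2 ^ (a + 1) ≤ 2 ^ c := Nat.pow_le_pow_right two_pos ha
  have hb' : 2 ^ (b + 1) ≤ 2 ^ c := Nat.pow_le_pow_right two_pos hb
  rw [pow_succ] at ha' hb'
  omega

lemma two_pow_two_pow_two_pow_add_lt (i : ℕ) :
    2 ^ 2 ^ 2 ^ i + i * 2 ^ 3 ^ (i + 1) < 2 ^ 2 ^ 2 ^ (i + 1) := by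
  have h1 : i * 2 ^ 3 ^ (i + 1) < 2 ^ (i + 3 ^ (i + 1)) :=
    (Nat.mul_lt_mul_of_pos_right Nat.lt_two_pow_self (Nat.two_pow_pos _)).trans_eq
      (pow_add 2 _ _).symm
  have h2 : i + 3 ^ (i + 1) < 2 ^ 2 ^ (i + 1) :=
    calc i + 3 ^ (i + 1) < (i + 1) + 3 ^ (i + 1) := by omega
      _ ≤ 4 ^ (i + 1) := add_le_four_pow _
      _ = 2 ^ (2 * (i + 1)) := by rw [pow_mul]; norm_num
      _ ≤ 2 ^ 2 ^ (i + 1) := Nat.pow_le_pow_right two_pos (by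
          have : i + 1 ≤ 2 ^ i := Nat.lt_two_pow_self
          rw [pow_succ]
          omega)
  have h3 : 2 ^ 2 ^ i < 2 ^ 2 ^ (i + 1) :=
    Nat.pow_lt_pow_right one_lt_two (Nat.pow_lt_pow_right one_lt_two (Nat.lt_succ_self i))
  linarith [two_pow_add_two_pow_le h3 h2]

lemma two_mul_lacunaryTerm_le_succ {i m : ℕ} (hi : 1 ≤ i) (hm : m ≤ 2 ^ 3 ^ (i + 1)) (m' k : ℕ) :
    2 * lacunaryTerm i m k ≤ lacunaryTerm (i + 1) m' (k + 1) := by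
  have hmA := le_two_pow_add_mul hi m k
  have hgap : 2 ^ 2 ^ 2 ^ i + i * m + 1 ≤ 2 ^ 2 ^ 2 ^ (i + 1) := by
    have := two_pow_two_pow_two_pow_add_lt i
    have := Nat.mul_le_mul_left i hm
    omega
  calc 2 * lacunaryTerm i m k ≤ 2 ^ 2 ^ 2 ^ 2 ^ i * (2 ^ (k + i * m) * 4) := by
        unfold lacunaryTerm
        rw [mul_left_comm]
        exact Nat.mul_le_mul_left _ (by omega)
    _ = 2 ^ (2 ^ 2 ^ 2 ^ i + i * m + 1) * 2 ^ (k + 1) := by ring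
    _ ≤ 2 ^ 2 ^ 2 ^ 2 ^ (i + 1) * 2 ^ (k + 1) :=
        Nat.mul_le_mul_right _ (Nat.pow_le_pow_right two_pos hgap)
    _ ≤ lacunaryTerm (i + 1) m' (k + 1) :=
        Nat.mul_le_mul_left _
          ((Nat.pow_le_pow_right two_pos (by omega)).trans (Nat.le_add_right _ _))

namespace IsConsecutiveEquipartition

variable {M : ℕ → ℕ} {blk : ℕ → ℕ → Finset ℕ} {n : ℕ → ℕ}

lemma pos (hP : IsConsecutiveEquipartition M blk)
    (hn : ∀ i, ∀ m ∈ Icc 1 (M i), ∀ k ∈ blk i m, n k = lacunaryTerm i m k) {k : ℕ} (hk : 1 ≤ k) :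
    0 < n k := by
  obtain ⟨i, hki⟩ := exists_mem_Blk hk
  obtain ⟨m, hm, hkm⟩ := (hP.mem_Blk_iff_exists i k).1 hki
  exact hn i m hm k hkm ▸ lacunaryTerm_pos i m k

/-- The threshold `4 ≤ k` excludes `Δ_0 = {1, 2, 3}`: there, with `i = 0`, moving to the next
sub-block need not double the term. -/
lemma two_sub_mul_le_succ (hP : IsConsecutiveEquipartition M blk) (hM : ∀ i, M i ≤ #(Blk i))
    (hn : ∀ i, ∀ m ∈ Icc 1 (M i), ∀ k ∈ blk i m, n k = lacunaryTerm i m k) {k : ℕ} (hk : 4 ≤ k) :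
    (2 - 4 * k ^ 3 / 2 ^ k : ℝ) * n k ≤ n (k + 1) := by
  obtain ⟨i, hki⟩ := exists_mem_Blk (by omega : 1 ≤ k)
  have hi := one_le_of_mem_Blk hki hk
  obtain ⟨m, hm, hkm⟩ := (hP.mem_Blk_iff_exists i k).1 hki
  have hmM := (hM i).trans' (mem_Icc.1 hm).2
  have of_two_mul : ∀ x, 2 * lacunaryTerm i m k ≤ x →
      (2 - 4 * k ^ 3 / 2 ^ k : ℝ) * lacunaryTerm i m k ≤ x := fun x hx => by
    have : (0 : ℝ) ≤ 4 * k ^ 3 / 2 ^ k := by positivity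
    have : (2 * lacunaryTerm i m k : ℝ) ≤ x := by exact_mod_cast hx
    nlinarith [(Nat.cast_nonneg (lacunaryTerm i m k) : (0 : ℝ) ≤ _)]
  rw [hn i m hm k hkm]
  rcases hP.succ_mem_cases hm hkm with h | ⟨m', hm', hmm', h⟩ | ⟨m', hm', h⟩
  · rw [hn i m hm _ h]
    refine le_trans ?_ (two_sub_mul_le_lacunaryTerm_succ i m k)
    gcongr
    exact_mod_cast hmM.trans (card_Blk_le_four_mul_pow_three hki)
  · rw [hn i m' hm' _ h]
    exact of_two_mul _ (two_mul_lacunaryTerm_le_of_lt hi hmm' k)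
  · rw [hn (i + 1) m' hm' _ h]
    exact of_two_mul _ (two_mul_lacunaryTerm_le_succ hi (hmM.trans (card_Blk_le_two_pow i)) m' k)

lemma frequently_succ_le_two_mul (hP : IsConsecutiveEquipartition M blk)
    (hn : ∀ i, ∀ m ∈ Icc 1 (M i), ∀ k ∈ blk i m, n k = lacunaryTerm i m k)
    (hM : ∃ᶠ i in atTop, 2 * M i < #(Blk i)) : ∃ᶠ k in atTop, n (k + 1) ≤ 2 * n k := by
  rw [frequently_atTop] at hM ⊢
  intro K
  obtain ⟨i, hiK, hi⟩ := hM K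
  have h1 : 1 ∈ Icc 1 (M i) := mem_Icc.2 ⟨le_rfl, hP.one_le i⟩
  obtain ⟨k, hk, hk'⟩ := hP.exists_add_one_mem h1 (hP.two_le_card hi h1)
  refine ⟨k, ?_, ?_⟩
  · have := (mem_Blk_iff.1 (hP.subset_Blk h1 hk)).1
    have := blockStart_strictMono.id_le i
    simp only [id] at this
    omega
  · rw [hn i 1 h1 k hk, hn i 1 h1 _ hk']
    exact lacunaryTerm_succ_le i 1 k

end IsConsecutiveEquipartition

theorem statement5_general
    (g : ℕ → ℝ)
    (hg_bounds : ∀ N : ℕ, 1 ≤ N → 1 ≤ g N ∧ g N ≤ N)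
    (hg_ratio_top : Tendsto (fun N : ℕ => (N : ℝ) / g N) atTop atTop)
    -- `blk i m`, `1 ≤ m ≤ M(i)`, are the consecutive sub-blocks Δ_i^{(m)} of Δ_i,
    -- with cardinalities differing by at most 1
    (blk : ℕ → ℕ → Finset ℕ)
    (hcover : ∀ i k, k ∈ Blk i ↔ ∃ m, m ∈ Finset.Icc 1 (Mblk g i) ∧ k ∈ blk i m)
    (hconsec : ∀ i m m', m < m' → ∀ k ∈ blk i m, ∀ k' ∈ blk i m', k < k')
    (hcard : ∀ i, ∀ m ∈ Finset.Icc 1 (Mblk g i), ∀ m' ∈ Finset.Icc 1 (Mblk g i),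
      (blk i m).card ≤ (blk i m').card + 1)
    -- n_k = 2^{2^{2^{2^i}}}·(2^{k+i·m} + m) for k ∈ Δ_i^{(m)}
    (n : ℕ → ℕ)
    (hn : ∀ i, ∀ m ∈ Finset.Icc 1 (Mblk g i), ∀ k ∈ blk i m,
      n k = 2^(2^(2^(2^i))) * (2^(k + i*m) + m)) :
    Filter.liminf (fun k : ℕ => (n (k+1) : ℝ) / (n k : ℝ)) atTop = 2 ∧
    ∃ q : ℝ, 1 < q ∧ ∀ᶠ k in atTop, q * (n k : ℝ) ≤ (n (k+1) : ℝ) := by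
  have hP : IsConsecutiveEquipartition (Mblk g) blk := ⟨hcover, hconsec, hcard⟩
  have hpos : ∀ᶠ k in atTop, (0 : ℝ) < n k :=
    eventually_atTop.2 ⟨1, fun k hk => by exact_mod_cast hP.pos hn hk⟩
  have hlow : ∀ᶠ k : ℕ in atTop, (2 - 4 * k ^ 3 / 2 ^ k : ℝ) * n k ≤ n (k + 1) :=
    eventually_atTop.2 ⟨4, fun k hk => hP.two_sub_mul_le_succ (Mblk_le_card_Blk hg_bounds) hn hk⟩
  have hb : Tendsto (fun k : ℕ => (2 - 4 * k ^ 3 / 2 ^ k : ℝ)) atTop (𝓝 2) := by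
    simpa [mul_div_assoc] using
      ((tendsto_pow_const_div_const_pow_of_one_lt 3 one_lt_two).const_mul 4).const_sub (2 : ℝ)
  refine ⟨liminf_eq_of_tendsto_of_frequently_le hb ?_ ?_, 3 / 2, by norm_num, ?_⟩
  · filter_upwards [hlow, hpos] with k h hk
    exact (le_div_iff₀ hk).2 h
  · refine (hP.frequently_succ_le_two_mul hn
      (eventually_two_mul_Mblk_lt_card_Blk hg_bounds hg_ratio_top).frequently).mono fun k hk => ?_
    exact div_le_of_le_mul₀ (Nat.cast_nonneg _) zero_le_two (by exact_mod_cast hk)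
  · filter_upwards [hlow, hb.eventually (lt_mem_nhds (by norm_num : (3 / 2 : ℝ) < 2))] with k h h32
    exact (mul_le_mul_of_nonneg_right h32.le (Nat.cast_nonneg _)).trans h

theorem statement5
    (g : ℕ → ℝ)
    (hg_bounds : ∀ N : ℕ, 1 ≤ N → 1 ≤ g N ∧ g N ≤ N)
    (hg_mono : ∀ N : ℕ, 1 ≤ N → g N ≤ g (N+1))
    (hg_ratio_mono : ∀ N : ℕ, 1 ≤ N → (N : ℝ) / g N ≤ ((N:ℝ)+1) / g (N+1))
    (hg_top : Tendsto g atTop atTop)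
    (hg_ratio_top : Tendsto (fun N : ℕ => (N : ℝ) / g N) atTop atTop)
    -- `blk i m`, `1 ≤ m ≤ M(i)`, are the consecutive sub-blocks Δ_i^{(m)} of Δ_i,
    -- with cardinalities differing by at most 1
    (blk : ℕ → ℕ → Finset ℕ)
    (hcover : ∀ i k, k ∈ Blk i ↔ ∃ m, m ∈ Finset.Icc 1 (Mblk g i) ∧ k ∈ blk i m)
    (hdisj : ∀ i m m', m ≠ m' → Disjoint (blk i m) (blk i m'))
    (hconsec : ∀ i m m', m < m' → ∀ k ∈ blk i m, ∀ k' ∈ blk i m', k < k')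
    (hcard : ∀ i, ∀ m ∈ Finset.Icc 1 (Mblk g i), ∀ m' ∈ Finset.Icc 1 (Mblk g i),
      (blk i m).card ≤ (blk i m').card + 1)
    -- n_k = 2^{2^{2^{2^i}}}·(2^{k+i·m} + m) for k ∈ Δ_i^{(m)}
    (n : ℕ → ℕ)
    (hn : ∀ i, ∀ m ∈ Finset.Icc 1 (Mblk g i), ∀ k ∈ blk i m,
      n k = 2^(2^(2^(2^i))) * (2^(k + i*m) + m)) :
    Filter.liminf (fun k : ℕ => (n (k+1) : ℝ) / (n k : ℝ)) atTop = 2 ∧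
    ∃ q : ℝ, 1 < q ∧ ∀ᶠ k in atTop, q * (n k : ℝ) ≤ (n (k+1) : ℝ) :=
  statement5_general g hg_bounds hg_ratio_top blk hcover hconsec hcard n hn
end

section
/- Let (n_k)_{k≥1} be a lacunary sequence of positive integers with growth factor η > 1 (i.e., n_{k+1}/n_k ≥ η for all k). Let (Λ_r)_{r≥1} be a sequence of finite subsets of ℕ with the property that for every M > 0 there exists r₀ ∈ ℕ such that for all r ≥ r₀ one has min_{k ∈ Λ_{r+1}} n_k / max_{k ∈ Λ_r} n_k ≥ M. Then for all positive integers a, b: sup_{c ∈ ℤ} Σ_{r ≠ s} #{(k,ℓ) : k ∈ Λ_r, ℓ ∈ Λ_s, a·n_k − b·n_ℓ = c} = O(1), with the implied constant depending only on a, b, r₀, and η. -/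
/-! For a fixed `c`, the substitution `(a, b, c, k, l) ↦ (b, a, -c, l, k)` exchanges the solutions
with `r < s` and those with `s < r`, so it suffices to count the latter. Choose `r₀` such that
beyond it consecutive blocks are separated by the factor `M = 2 (a + b)`; then blocks beyond `r₀`
are disjoint and `M n_l ≤ n_k` whenever `r₀ ≤ s < r`, `k ∈ Λ_r`, `l ∈ Λ_s`.
If `s < r₀`, the pair `(s, l)` ranges over a fixed finite set, `l` determines `k`, and `k`
determines `r` up to the `r₀` blocks below `r₀`. If `r₀ ≤ s`, then `c ≤ a n_k ≤ 2 c`, so by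
lacunarity only boundedly many `k` occur, and `k` determines `l`, `r` and `s`. -/

open Finset Function

section Lacunary

variable {n : ℕ → ℕ} {η : ℝ}

lemma pow_mul_le_of_lacunary (hη : 0 ≤ η) (hlac : ∀ k, η * n k ≤ n (k + 1)) (k d : ℕ) :
    η ^ d * n k ≤ n (k + d) := by
  induction d with
  | zero => simp
  | succ d ih =>
    calc η ^ (d + 1) * n k = η * (η ^ d * n k) := by ring
      _ ≤ η * n (k + d) := by gcongr
      _ ≤ n (k + (d + 1)) := hlac (k + d)

lemma strictMono_of_lacunary (hη : 1 < η) (hpos : ∀ k, 0 < n k)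
    (hlac : ∀ k, η * n k ≤ n (k + 1)) : StrictMono n :=
  strictMono_nat_of_lt_succ fun k => by
    have : (n k : ℝ) < n (k + 1) :=
      (lt_mul_of_one_lt_left (by exact_mod_cast hpos k) hη).trans_le (hlac k)
    exact_mod_cast this

lemma card_le_of_lacunary (hη : 1 < η) (hpos : ∀ k, 0 < n k)
    (hlac : ∀ k, η * n k ≤ n (k + 1)) {C : ℝ} {K : ℕ} (hK : C < η ^ K) {t : Finset ℕ}
    (ht : ∀ k ∈ t, ∀ k' ∈ t, (n k' : ℝ) ≤ C * n k) : t.card ≤ K := by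
  rcases t.eq_empty_or_nonempty with rfl | hne
  · simp
  set k₀ := t.min' hne
  have hsub : t ⊆ Ico k₀ (k₀ + K) := by
    intro k hk
    have hle : k₀ ≤ k := t.min'_le k hk
    have hpow : η ^ (k - k₀) ≤ C := by
      have hgrow := pow_mul_le_of_lacunary (by linarith) hlac k₀ (k - k₀)
      rw [Nat.add_sub_cancel' hle] at hgrow
      exact le_of_mul_le_mul_right (hgrow.trans (ht k₀ (t.min'_mem hne) k hk))
        (by exact_mod_cast hpos k₀)
    have : k - k₀ < K := (pow_lt_pow_iff_right₀ hη).mp (hpow.trans_lt hK)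
    simp only [mem_Ico]
    omega
  simpa using card_le_card hsub

end Lacunary

section Blocks

variable {n : ℕ → ℕ} {Λ : ℕ → Finset ℕ} {M r₀ : ℕ}

def BlocksSeparated (n : ℕ → ℕ) (Λ : ℕ → Finset ℕ) (M r₀ : ℕ) : Prop :=
  ∀ ⦃r s⦄, r₀ ≤ r → r < s → ∀ k ∈ Λ r, ∀ l ∈ Λ s, M * n k ≤ n l

lemma exists_blocksSeparated (hΛne : ∀ r, (Λ r).Nonempty)
    (hsep : ∀ M : ℝ, 0 < M → ∃ r₀ : ℕ, ∀ r, r₀ ≤ r →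
      M * (((Λ r).sup' (hΛne r) n : ℕ) : ℝ) ≤ (((Λ (r+1)).inf' (hΛne (r+1)) n : ℕ) : ℝ))
    (hM : 0 < M) : ∃ r₀, BlocksSeparated n Λ M r₀ := by
  obtain ⟨r₀, hr₀⟩ := hsep M (by exact_mod_cast hM)
  have hstep : ∀ r, r₀ ≤ r → ∀ k ∈ Λ r, ∀ l ∈ Λ (r + 1), M * n k ≤ n l := by
    intro r hr k hk l hl
    have h := hr₀ r hr
    norm_cast at h
    calc M * n k ≤ M * (Λ r).sup' (hΛne r) n := Nat.mul_le_mul_left _ (le_sup' n hk)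
      _ ≤ (Λ (r + 1)).inf' (hΛne (r + 1)) n := h
      _ ≤ n l := inf'_le n hl
  refine ⟨r₀, fun r s hr hrs => ?_⟩
  induction s, hrs using Nat.le_induction with
  | base => exact hstep r hr
  | succ s hrs ih =>
    intro k hk l hl
    obtain ⟨m, hm⟩ := hΛne s
    calc M * n k ≤ n m := ih k hk m hm
      _ ≤ M * n m := Nat.le_mul_of_pos_left _ hM
      _ ≤ n l := hstep s (by omega) m hm l hl

lemma BlocksSeparated.eq_of_mem (h : BlocksSeparated n Λ M r₀) (hM : 2 ≤ M)
    (hpos : ∀ k, 0 < n k) {r s k : ℕ} (hr : r₀ ≤ r) (hs : r₀ ≤ s) (hkr : k ∈ Λ r)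
    (hks : k ∈ Λ s) : r = s := by
  have hnot : ∀ {r s}, r₀ ≤ r → k ∈ Λ r → k ∈ Λ s → ¬ r < s := fun hr hkr hks hrs => by
    have := h hr hrs k hkr k hks
    have := hpos k
    nlinarith
  exact le_antisymm (not_lt.mp (hnot hs hks hkr)) (not_lt.mp (hnot hr hkr hks))

end Blocks

section Solutions

variable (n : ℕ → ℕ) (a b : ℕ) (c : ℤ) (Λ : ℕ → Finset ℕ)

def solutions (r s : ℕ) : Finset (ℕ × ℕ) :=
  (Λ r ×ˢ Λ s).filter fun p => (a : ℤ) * n p.1 - (b : ℤ) * n p.2 = c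

lemma card_solutions_swap (r s : ℕ) :
    (solutions n a b c Λ r s).card = (solutions n b a (-c) Λ s r).card := by
  refine card_nbij' Prod.swap Prod.swap ?_ ?_ (fun _ _ => rfl) (fun _ _ => rfl) <;>
  · rintro ⟨k, l⟩
    simp only [solutions, coe_filter, Set.mem_ofPred_eq, mem_product, Prod.fst_swap,
      Prod.snd_swap]
    rintro ⟨⟨hk, hl⟩, h⟩
    exact ⟨⟨hl, hk⟩, by linarith⟩

variable {n a b c Λ}

lemma mem_sigma_solutions {P : Finset (ℕ × ℕ)} {r s k l : ℕ} :
    (⟨(r, s), (k, l)⟩ : (_ : ℕ × ℕ) × ℕ × ℕ) ∈ P.sigma (fun p => solutions n a b c Λ p.1 p.2) ↔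
      (r, s) ∈ P ∧ (k ∈ Λ r ∧ l ∈ Λ s) ∧ (a : ℤ) * n k - b * n l = c := by
  simp [solutions]

lemma snd_eq_of_sub_eq (hn : Injective n) (hb : 0 < b) {k l l' : ℕ}
    (h : (a : ℤ) * n k - b * n l = c) (h' : (a : ℤ) * n k - b * n l' = c) : l = l' :=
  hn <| by
    have : (b : ℤ) * n l = b * n l' := by linarith
    exact_mod_cast mul_left_cancel₀ (by positivity) this

lemma fst_eq_of_sub_eq (hn : Injective n) (ha : 0 < a) {k k' l : ℕ}
    (h : (a : ℤ) * n k - b * n l = c) (h' : (a : ℤ) * n k' - b * n l = c) : k = k' :=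
  hn <| by
    have : (a : ℤ) * n k = a * n k' := by linarith
    exact_mod_cast mul_left_cancel₀ (by positivity) this

lemma le_and_le_two_mul_of_sub_eq {x y : ℕ} (ha : 0 < a) (hxy : 2 * b * y ≤ x)
    (h : (a : ℤ) * x - b * y = c) : c ≤ a * x ∧ a * x ≤ 2 * c := by
  have hx : (x : ℤ) ≤ a * x := le_mul_of_one_le_left (by positivity) (by exact_mod_cast ha)
  have hxy' : (2 * b * y : ℤ) ≤ x := by exact_mod_cast hxy
  constructor <;> nlinarith [(by positivity : (0 : ℤ) ≤ b * y)]

end Solutions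

lemma sum_offDiag_eq_sum_lower_add_sum_lower_swap {β : Type*} [AddCommMonoid β]
    (f : ℕ → ℕ → β) (R : ℕ) :
    ∑ r ∈ range R, ∑ s ∈ range R, (if r = s then 0 else f r s) =
      ∑ r ∈ range R, ∑ s ∈ range R, (if s < r then f r s else 0) +
        ∑ r ∈ range R, ∑ s ∈ range R, (if s < r then f s r else 0) := by
  rw [sum_comm (f := fun r s => if s < r then f s r else 0), ← sum_add_distrib]
  refine sum_congr rfl fun r _ => ?_
  rw [← sum_add_distrib]
  refine sum_congr rfl fun s _ => ?_
  rcases lt_trichotomy r s with h | rfl | h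
  · simp [h.ne, h.not_gt, h]
  · simp
  · simp [h.ne', h, h.not_gt]

section Counting

variable {n : ℕ → ℕ} {Λ : ℕ → Finset ℕ} {a b M r₀ : ℕ} {c : ℤ}

lemma card_sigma_solutions_le_of_snd_lt (hn : Injective n) (hpos : ∀ k, 0 < n k) (ha : 0 < a)
    (hΛ : BlocksSeparated n Λ M r₀) (hM : 2 ≤ M) {P : Finset (ℕ × ℕ)}
    (hP : ∀ p ∈ P, p.2 < r₀) :
    (P.sigma fun p => solutions n a b c Λ p.1 p.2).card ≤
      r₀ * ((range r₀).biUnion Λ).card * (r₀ + 1) := by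
  refine (card_le_card_of_injOn (t := (range r₀ ×ˢ (range r₀).biUnion Λ) ×ˢ range (r₀ + 1))
    (fun x => ((x.1.2, x.2.2), min x.1.1 r₀)) ?_ ?_).trans_eq
    (by simp only [card_product, card_range])
  · rintro ⟨⟨r, s⟩, k, l⟩ hx
    obtain ⟨hrs, ⟨-, hl⟩, -⟩ := mem_sigma_solutions.mp hx
    have hs := hP _ hrs
    simp only [coe_product, coe_range, coe_biUnion, Set.mem_prod, Set.mem_Iio,
      Set.mem_iUnion, mem_coe, exists_prop]
    exact ⟨⟨hs, s, hs, hl⟩, by omega⟩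
  · rintro ⟨⟨r, s⟩, k, l⟩ hx ⟨⟨r', s'⟩, k', l'⟩ hx' hxx'
    obtain ⟨-, ⟨hk, -⟩, h⟩ := mem_sigma_solutions.mp hx
    obtain ⟨-, ⟨hk', -⟩, h'⟩ := mem_sigma_solutions.mp hx'
    simp only [Prod.mk.injEq] at hxx'
    obtain ⟨⟨rfl, rfl⟩, hmin⟩ := hxx'
    obtain rfl := fst_eq_of_sub_eq hn ha h h'
    obtain rfl : r = r' := by
      by_cases hr : r₀ ≤ r ∧ r₀ ≤ r'
      · exact hΛ.eq_of_mem hM hpos hr.1 hr.2 hk hk'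
      · omega
    rfl

lemma card_sigma_solutions_le_of_separated {η : ℝ} {K : ℕ} (hη : 1 < η) (hpos : ∀ k, 0 < n k)
    (hlac : ∀ k, η * n k ≤ n (k + 1)) (hK : 2 < η ^ K) (ha : 0 < a) (hb : 0 < b)
    (hΛ : BlocksSeparated n Λ M r₀) (hM : 2 * b ≤ M) {P : Finset (ℕ × ℕ)}
    (hP : ∀ p ∈ P, r₀ ≤ p.2 ∧ p.2 < p.1) :
    (P.sigma fun p => solutions n a b c Λ p.1 p.2).card ≤ K := by
  have hn := (strictMono_of_lacunary hη hpos hlac).injective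
  have hM2 : 2 ≤ M := by omega
  have hwindow : ∀ x ∈ P.sigma fun p => solutions n a b c Λ p.1 p.2,
      c ≤ a * n x.2.1 ∧ a * n x.2.1 ≤ 2 * c := by
    rintro ⟨⟨r, s⟩, k, l⟩ hx
    obtain ⟨hrs, ⟨hk, hl⟩, h⟩ := mem_sigma_solutions.mp hx
    obtain ⟨hs, hsr⟩ := hP _ hrs
    have hgap : M * n l ≤ n k := hΛ hs hsr l hl k hk
    exact le_and_le_two_mul_of_sub_eq ha ((Nat.mul_le_mul_right _ hM).trans hgap) h
  have hinj : Set.InjOn (fun x : (_ : ℕ × ℕ) × ℕ × ℕ => x.2.1)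
      (P.sigma fun p => solutions n a b c Λ p.1 p.2 : Set _) := by
    rintro ⟨⟨r, s⟩, k, l⟩ hx ⟨⟨r', s'⟩, k', l'⟩ hx' (rfl : k = k')
    obtain ⟨hrs, ⟨hk, hl⟩, h⟩ := mem_sigma_solutions.mp hx
    obtain ⟨hrs', ⟨hk', hl'⟩, h'⟩ := mem_sigma_solutions.mp hx'
    obtain ⟨hs, hsr⟩ := hP _ hrs
    obtain ⟨hs', hsr'⟩ := hP _ hrs'
    obtain rfl := snd_eq_of_sub_eq hn hb h h'
    obtain rfl := hΛ.eq_of_mem hM2 hpos (hs.trans hsr.le) (hs'.trans hsr'.le) hk hk'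
    obtain rfl := hΛ.eq_of_mem hM2 hpos hs hs' hl hl'
    rfl
  rw [← card_image_of_injOn hinj]
  refine card_le_of_lacunary hη hpos hlac hK ?_
  simp only [mem_image]
  rintro _ ⟨x, hx, rfl⟩ _ ⟨y, hy, rfl⟩
  have hxy : (a : ℤ) * n y.2.1 ≤ a * (2 * n x.2.1) := by
    linarith [(hwindow x hx).1, (hwindow y hy).2]
  exact_mod_cast Nat.le_of_mul_le_mul_left (by exact_mod_cast hxy) ha

lemma sum_card_solutions_lower_le {η : ℝ} {K : ℕ} (hη : 1 < η) (hpos : ∀ k, 0 < n k)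
    (hlac : ∀ k, η * n k ≤ n (k + 1)) (hK : 2 < η ^ K) (ha : 0 < a) (hb : 0 < b)
    (hΛ : BlocksSeparated n Λ M r₀) (hM : 2 * b ≤ M) (R : ℕ) :
    ∑ r ∈ range R, ∑ s ∈ range R, (if s < r then (solutions n a b c Λ r s).card else 0) ≤
      r₀ * ((range r₀).biUnion Λ).card * (r₀ + 1) + K := by
  set P := (range R ×ˢ range R).filter fun p => p.2 < p.1
  rw [← sum_product' (f := fun r s => if s < r then (solutions n a b c Λ r s).card else 0),
    ← sum_filter, ← sum_filter_add_sum_filter_not P (fun p => p.2 < r₀), ← card_sigma,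
    ← card_sigma]
  refine add_le_add (card_sigma_solutions_le_of_snd_lt
    (strictMono_of_lacunary hη hpos hlac).injective hpos ha hΛ (by omega) ?_)
    (card_sigma_solutions_le_of_separated hη hpos hlac hK ha hb hΛ hM ?_)
  · intro p hp
    exact (mem_filter.mp hp).2
  · intro p hp
    simp only [P, mem_filter, not_lt] at hp
    exact ⟨hp.2, hp.1.2⟩

end Counting

theorem statement7
    (n : ℕ → ℕ) (hn_pos : ∀ k, 1 ≤ n k)
    (η : ℝ) (hη : 1 < η)
    (hlac : ∀ k, η * (n k : ℝ) ≤ (n (k+1) : ℝ))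
    (Λ : ℕ → Finset ℕ) (hΛne : ∀ r, (Λ r).Nonempty)
    (hsep : ∀ M : ℝ, 0 < M → ∃ r₀ : ℕ, ∀ r, r₀ ≤ r →
      M * (((Λ r).sup' (hΛne r) n : ℕ) : ℝ) ≤ (((Λ (r+1)).inf' (hΛne (r+1)) n : ℕ) : ℝ))
    (a b : ℕ) (ha : 1 ≤ a) (hb : 1 ≤ b) :
    ∃ C : ℝ, ∀ c : ℤ, ∀ R : ℕ,
      (∑ r ∈ Finset.range R, ∑ s ∈ Finset.range R,
        if r = s then 0 else
          (((Λ r ×ˢ Λ s).filter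
            (fun p => (a : ℤ) * n p.1 - (b : ℤ) * n p.2 = c)).card : ℝ)) ≤ C := by
  obtain ⟨K, hK⟩ := pow_unbounded_of_one_lt 2 hη
  obtain ⟨r₀, hΛ⟩ := exists_blocksSeparated hΛne hsep (M := 2 * (a + b)) (by omega)
  set B := r₀ * ((range r₀).biUnion Λ).card * (r₀ + 1) + K
  refine ⟨2 * B, fun c R => ?_⟩
  have hlower := sum_card_solutions_lower_le (c := c) hη hn_pos hlac hK ha hb hΛ (by omega) R
  have hupper := sum_card_solutions_lower_le (c := -c) hη hn_pos hlac hK hb ha hΛ (by omega) R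
  simp only [← card_solutions_swap] at hupper
  change ∑ r ∈ range R, ∑ s ∈ range R,
    (if r = s then 0 else ((solutions n a b c Λ r s).card : ℝ)) ≤ _
  rw [sum_offDiag_eq_sum_lower_add_sum_lower_swap]
  exact_mod_cast two_mul B ▸ add_le_add hlower hupper
end

section
/- For the constructed sequence (n_k)_{k≥1}, let a, b be positive integers with a = 2^r·b for some integer r ≥ 1. Then there is a constant C (depending on a and b only) such that for every integer c, Σ_{i≥1} Σ_{m=1}^{M(i)} #{(k,ℓ) : k, ℓ ∈ Δ_i^{(m)}, k + r ≠ ℓ, a·n_k − b·n_ℓ = c} ≤ C. -/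
/-!
For `k, ℓ ∈ Δ_i^{(m)}` one has `a n_k - b n_ℓ = b 2^{E_i} D` with `E_i = 2^{2^{2^i}}` and
`D = 2^{k+r+im} - 2^{ℓ+im} + (2^r - 1) m`. The two powers of two are divisible by `2^{3^{i+1}}`
while `m < 2^{3^{i+1}}`, so the `2`-adic valuation of `c / b` lies in the window
`[E_i, E_i + 3^{i+1})`; these windows are disjoint, so `c` determines `i`. Inside block `i`, `D`
is congruent to `(2^r - 1) m` modulo `2^{2^{3^i - 1}}`, which pins down `m`, and then
`2^{k+r+im} - 2^{ℓ+im}` with `k + r ≠ ℓ` pins down `k` and `ℓ` by uniqueness of binary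
expansions. So once `i ≥ r + 2` every `c` has at most one representation, and the finitely many
smaller blocks contribute a bounded number.
-/

open Filter

lemma two_pow_add_two_pow_lt {u v u' v' : ℕ} (huv : u ≤ v) (hv : v < v') :
    2 ^ u + 2 ^ v < 2 ^ u' + 2 ^ v' :=
  calc 2 ^ u + 2 ^ v ≤ 2 ^ v + 2 ^ v := by gcongr; omega
    _ = 2 ^ (v + 1) := by ring
    _ ≤ 2 ^ v' := Nat.pow_le_pow_right two_pos hv
    _ < 2 ^ u' + 2 ^ v' := Nat.lt_add_of_pos_left (by positivity)

lemma eq_of_two_pow_add_two_pow_eq_of_le {u v u' v' : ℕ} (huv : u ≤ v) (huv' : u' ≤ v')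
    (h : 2 ^ u + 2 ^ v = 2 ^ u' + 2 ^ v') : u = u' ∧ v = v' := by
  obtain rfl : v = v' := by
    by_contra hne
    rcases Nat.lt_or_gt_of_ne hne with hlt | hgt
    · exact (two_pow_add_two_pow_lt huv hlt).ne h
    · exact (two_pow_add_two_pow_lt huv' hgt).ne h.symm
  exact ⟨Nat.pow_right_injective le_rfl (Nat.add_right_cancel h), rfl⟩

lemma eq_of_two_pow_add_two_pow_eq {u v u' v' : ℕ} (h : 2 ^ u + 2 ^ v = 2 ^ u' + 2 ^ v') :
    (u = u' ∧ v = v') ∨ (u = v' ∧ v = u') := by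
  rcases le_total u v with huv | hvu <;> rcases le_total u' v' with huv' | hvu'
  · exact .inl (eq_of_two_pow_add_two_pow_eq_of_le huv huv' h)
  · exact .inr (eq_of_two_pow_add_two_pow_eq_of_le huv hvu' (by rw [h, add_comm]))
  · exact .inr (eq_of_two_pow_add_two_pow_eq_of_le hvu huv' (by rw [← h, add_comm])).symm
  · exact .inl (eq_of_two_pow_add_two_pow_eq_of_le hvu hvu' (by rw [add_comm, h, add_comm])).symm

lemma eq_of_two_pow_mul_odd_eq {e e' : ℕ} {O O' : ℤ} (hO : Odd O) (hO' : Odd O')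
    (h : 2 ^ e * O = 2 ^ e' * O') : e = e' := by
  wlog hle : e ≤ e' generalizing e e' O O'
  · exact (this hO' hO h.symm (by omega)).symm
  by_contra hne
  have hO_eq : O = 2 ^ (e' - e) * O' := by
    apply mul_left_cancel₀ (pow_ne_zero e two_ne_zero)
    rw [h, ← mul_assoc, ← pow_add, Nat.add_sub_cancel' hle]
  rw [hO_eq] at hO
  exact Int.not_even_iff_odd.mpr hO ((Int.even_pow.mpr ⟨even_two, by omega⟩).mul_right _)

lemma eq_of_add_eq_add_of_lt {E w : ℕ → ℕ} (hE : ∀ i, E i + w i ≤ E (i + 1))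
    {i j s t : ℕ} (hs : s < w i) (ht : t < w j) (h : E i + s = E j + t) : i = j := by
  have hmono : Monotone E := monotone_nat_of_le_succ fun i => (Nat.le_add_right _ _).trans (hE i)
  wlog hij : i ≤ j generalizing i j s t
  · exact (this ht hs h.symm (by omega)).symm
  by_contra hne
  have := hmono (show i + 1 ≤ j by omega)
  have := hE i
  omega

lemma exists_two_pow_mul_odd_eq {r L u v m : ℕ} (hr : r ≠ 0) (hm : m ≠ 0) (hmL : m < 2 ^ L)
    (hu : L ≤ u) (hv : L ≤ v) :
    ∃ s < L, ∃ O : ℤ, Odd O ∧ (2 : ℤ) ^ u - 2 ^ v + (2 ^ r - 1) * m = 2 ^ s * O := by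
  obtain ⟨s, t, ht, rfl⟩ := Nat.exists_eq_two_pow_mul_odd hm
  have hs : s < L := (Nat.pow_lt_pow_iff_right (by norm_num)).mp
    ((Nat.le_mul_of_pos_right _ ht.pos).trans_lt hmL)
  refine ⟨s, hs, 2 ^ (u - s) - 2 ^ (v - s) + (2 ^ r - 1) * t, ?_, ?_⟩
  · have hpow : ∀ {e}, s < e → Even ((2 : ℤ) ^ (e - s)) :=
      fun he => Int.even_pow.mpr ⟨even_two, by omega⟩
    exact ((hpow (by omega)).sub (hpow (by omega))).add_odd
      (((Int.even_pow.mpr ⟨even_two, hr⟩).sub_odd odd_one).mul (by exact_mod_cast ht))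
  · have hsplit : ∀ {e}, s ≤ e → (2 : ℤ) ^ e = 2 ^ s * 2 ^ (e - s) :=
      fun he => by rw [← pow_add, Nat.add_sub_cancel' he]
    rw [hsplit (hs.le.trans hu), hsplit (hs.le.trans hv)]
    push_cast
    ring

lemma eq_of_two_pow_sub_two_pow_add_eq {r L W : ℕ} (hr : r ≠ 0) (hW : r + L ≤ W)
    {m m' u v u' v' : ℕ} (hm : m < 2 ^ L) (hm' : m' < 2 ^ L)
    (hu : W ≤ u) (hv : W ≤ v) (hu' : W ≤ u') (hv' : W ≤ v') (huv : u ≠ v)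
    (h : (2 : ℤ) ^ u - 2 ^ v + (2 ^ r - 1) * m = 2 ^ u' - 2 ^ v' + (2 ^ r - 1) * m') :
    m = m' ∧ u = u' ∧ v = v' := by
  have hr1 : (1 : ℤ) < 2 ^ r := one_lt_pow₀ one_lt_two hr
  obtain rfl : m = m' := by
    have hdvd : (2 : ℤ) ^ W ∣ (2 ^ r - 1) * (m' - m) := by
      rw [show (2 ^ r - 1) * ((m' : ℤ) - m) = 2 ^ u - 2 ^ v - 2 ^ u' + 2 ^ v' by linarith]
      exact ((pow_dvd_pow 2 hu).sub (pow_dvd_pow 2 hv) |>.sub (pow_dvd_pow 2 hu')).add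
        (pow_dvd_pow 2 hv')
    have hmZ : (m : ℤ) < 2 ^ L := by exact_mod_cast hm
    have hm'Z : (m' : ℤ) < 2 ^ L := by exact_mod_cast hm'
    have hdiff : |(m' : ℤ) - m| < 2 ^ L :=
      abs_sub_lt_iff.mpr
        ⟨by linarith [m.cast_nonneg (α := ℤ)], by linarith [m'.cast_nonneg (α := ℤ)]⟩
    have habs : |(2 ^ r - 1) * ((m' : ℤ) - m)| < 2 ^ W :=
      calc |(2 ^ r - 1) * ((m' : ℤ) - m)| = (2 ^ r - 1) * |(m' : ℤ) - m| := by
            rw [abs_mul, abs_of_pos (by linarith)]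
        _ < 2 ^ r * 2 ^ L := by nlinarith [abs_nonneg ((m' : ℤ) - m)]
        _ = 2 ^ (r + L) := (pow_add 2 r L).symm
        _ ≤ 2 ^ W := pow_le_pow_right₀ one_le_two hW
    have := Int.eq_zero_of_abs_lt_dvd hdvd habs
    have : (m' : ℤ) - m = 0 := (mul_eq_zero.mp this).resolve_left (by linarith)
    omega
  have hsum : 2 ^ u + 2 ^ v' = 2 ^ u' + 2 ^ v := by
    have : (2 : ℤ) ^ u + 2 ^ v' = 2 ^ u' + 2 ^ v := by linarith
    exact_mod_cast this
  rcases eq_of_two_pow_add_two_pow_eq hsum with ⟨h1, h2⟩ | ⟨h1, -⟩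
  · exact ⟨rfl, h1, h2.symm⟩
  · exact absurd h1 huv

lemma four_mul_le_two_pow_pred {N : ℕ} (hN : 6 ≤ N) : 4 * N ≤ 2 ^ (N - 1) := by
  induction N, hN using Nat.le_induction with
  | base => norm_num
  | succ N hN ih =>
    rw [Nat.add_sub_cancel, show N = N - 1 + 1 by omega, pow_succ]
    omega

lemma add_three_pow_succ_le {r i : ℕ} (hi : r + 2 ≤ i) :
    r + 3 ^ (i + 1) ≤ 2 ^ (3 ^ i - 1) := by
  have h9 : 9 ≤ 3 ^ i := by
    simpa using Nat.pow_le_pow_right (show 0 < 3 by norm_num) (show 2 ≤ i by omega)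
  have := four_mul_le_two_pow_pred (show 6 ≤ 3 ^ i by omega)
  have := Nat.lt_pow_self (show 1 < 3 by norm_num) (n := i)
  rw [pow_succ]
  omega

lemma two_pow_two_pow_add_three_pow_le (i : ℕ) :
    2 ^ 2 ^ 2 ^ i + 3 ^ (i + 1) ≤ 2 ^ 2 ^ 2 ^ (i + 1) := by
  set x := 2 ^ 2 ^ i
  have hi : i + 1 ≤ 2 ^ i := Nat.lt_two_pow_self
  have hx2 : 2 ≤ x := by
    have := Nat.pow_le_pow_right two_pos (Nat.one_le_two_pow (n := i))
    simpa using this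
  have hsq : 2 ^ 2 ^ (i + 1) = x ^ 2 := by rw [pow_succ, pow_mul]
  have h3 : 3 ^ (i + 1) ≤ 2 ^ x :=
    calc 3 ^ (i + 1) ≤ 4 ^ (i + 1) := Nat.pow_le_pow_left (by norm_num) _
      _ = 2 ^ (2 * (i + 1)) := by rw [pow_mul]; norm_num
      _ ≤ 2 ^ x := Nat.pow_le_pow_right two_pos (by
          have := Nat.pow_le_pow_right two_pos hi
          rw [pow_succ] at this
          omega)
  calc 2 ^ x + 3 ^ (i + 1) ≤ 2 ^ (x + 1) := by rw [pow_succ]; omega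
    _ ≤ 2 ^ x ^ 2 := Nat.pow_le_pow_right two_pos (by nlinarith)
    _ = 2 ^ 2 ^ 2 ^ (i + 1) := by rw [hsq]

lemma card_Blk_lt (i : ℕ) : (Blk i).card < 2 ^ 3 ^ (i + 1) := by
  rw [Blk, Nat.card_Ico]
  exact (Nat.sub_le _ _).trans_lt (Nat.pow_lt_pow_right one_lt_two
    (Nat.sub_lt (Nat.pow_pos three_pos) one_pos))

lemma Mblk_lt {g : ℕ → ℝ} (hg : ∀ N : ℕ, 1 ≤ N → g N ≤ N) (i : ℕ) :
    Mblk g i < 2 ^ 3 ^ (i + 1) := by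
  have hpos : 1 ≤ (Blk i).card := by
    have h3 : 3 ^ i < 3 ^ (i + 1) := Nat.pow_lt_pow_right (by norm_num) (Nat.lt_succ_self i)
    rw [Blk, Nat.card_Ico]
    exact Nat.sub_pos_of_lt (Nat.pow_lt_pow_right one_lt_two
      (Nat.sub_lt_sub_right (Nat.one_le_pow _ _ three_pos) h3))
  exact (Nat.ceil_le.mpr (hg _ hpos)).trans_lt (card_Blk_lt i)

/-- The value `n_k` for `k ∈ Δ_i^{(m)}`. -/
def nBlock (i m k : ℕ) : ℕ := 2 ^ 2 ^ 2 ^ 2 ^ i * (2 ^ (k + i * m) + m)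

lemma mul_nBlock_sub_mul_nBlock (r b i m k ℓ : ℕ) :
    ((2 ^ r * b : ℕ) : ℤ) * nBlock i m k - b * nBlock i m ℓ
      = b * 2 ^ 2 ^ 2 ^ 2 ^ i * (2 ^ (k + r + i * m) - 2 ^ (ℓ + i * m) + (2 ^ r - 1) * m) := by
  simp only [nBlock]
  push_cast
  ring

/-- What the uniqueness argument uses about `k, ℓ ∈ Δ_i^{(m)}` once `i ≥ r + 2`. -/
structure IsLargeBlockPair (r i m k ℓ : ℕ) : Prop where
  add_two_le : r + 2 ≤ i
  pos : 0 < m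
  lt : m < 2 ^ 3 ^ (i + 1)
  le_left : 2 ^ (3 ^ i - 1) ≤ k
  le_right : 2 ^ (3 ^ i - 1) ≤ ℓ
  add_ne : k + r ≠ ℓ

lemma IsLargeBlockPair.of_mem {g : ℕ → ℝ} (hg : ∀ N : ℕ, 1 ≤ N → g N ≤ N)
    {blk : Finset ℕ} {r i m k ℓ : ℕ} (hi : r + 2 ≤ i) (hm : m ∈ Finset.Icc 1 (Mblk g i))
    (hblk : blk ⊆ Blk i) (hk : k ∈ blk) (hℓ : ℓ ∈ blk) (hne : k + r ≠ ℓ) :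
    IsLargeBlockPair r i m k ℓ :=
  ⟨hi, (Finset.mem_Icc.mp hm).1, (Finset.mem_Icc.mp hm).2.trans_lt (Mblk_lt hg i),
    (Finset.mem_Ico.mp (hblk hk)).1, (Finset.mem_Ico.mp (hblk hℓ)).1, hne⟩

theorem IsLargeBlockPair.eq_of_mul_nBlock_sub_eq {r b i m k ℓ i' m' k' ℓ' : ℕ} (hr : r ≠ 0)
    (hb : b ≠ 0) (hP : IsLargeBlockPair r i m k ℓ) (hP' : IsLargeBlockPair r i' m' k' ℓ')
    (h : ((2 ^ r * b : ℕ) : ℤ) * nBlock i m k - b * nBlock i m ℓ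
      = ((2 ^ r * b : ℕ) : ℤ) * nBlock i' m' k' - b * nBlock i' m' ℓ') :
    i = i' ∧ m = m' ∧ k = k' ∧ ℓ = ℓ' := by
  rw [mul_nBlock_sub_mul_nBlock, mul_nBlock_sub_mul_nBlock] at h
  have hgap := add_three_pow_succ_le hP.add_two_le
  have hgap' := add_three_pow_succ_le hP'.add_two_le
  have := hP.le_left; have := hP.le_right; have := hP'.le_left; have := hP'.le_right
  obtain ⟨s, hs, O, hO, hD⟩ := exists_two_pow_mul_odd_eq (u := k + r + i * m) (v := ℓ + i * m)
    hr hP.pos.ne' hP.lt (by omega) (by omega)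
  obtain ⟨s', hs', O', hO', hD'⟩ := exists_two_pow_mul_odd_eq (u := k' + r + i' * m')
    (v := ℓ' + i' * m') hr hP'.pos.ne' hP'.lt (by omega) (by omega)
  have hexp : 2 ^ 2 ^ 2 ^ i + s = 2 ^ 2 ^ 2 ^ i' + s' := by
    refine eq_of_two_pow_mul_odd_eq hO hO' (mul_left_cancel₀ (Int.natCast_ne_zero.mpr hb) ?_)
    rw [pow_add, pow_add]
    linear_combination h - (b * 2 ^ 2 ^ 2 ^ 2 ^ i : ℤ) * hD + (b * 2 ^ 2 ^ 2 ^ 2 ^ i' : ℤ) * hD'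
  obtain rfl : i = i' := eq_of_add_eq_add_of_lt two_pow_two_pow_add_three_pow_le hs hs' hexp
  obtain ⟨rfl, hu, hv⟩ := eq_of_two_pow_sub_two_pow_add_eq hr hgap hP.lt hP'.lt
    (by omega) (by omega) (by omega) (by omega) (by have := hP.add_ne; omega)
    (mul_left_cancel₀ (by positivity) h)
  exact ⟨rfl, rfl, by omega, by omega⟩

theorem statement13_general
    (g : ℕ → ℝ)
    (hg_bounds : ∀ N : ℕ, 1 ≤ N → 1 ≤ g N ∧ g N ≤ N)
    (blk : ℕ → ℕ → Finset ℕ)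
    (hcover : ∀ i k, k ∈ Blk i ↔ ∃ m, m ∈ Finset.Icc 1 (Mblk g i) ∧ k ∈ blk i m)
    (n : ℕ → ℕ)
    (hn : ∀ i, ∀ m ∈ Finset.Icc 1 (Mblk g i), ∀ k ∈ blk i m,
      n k = 2^(2^(2^(2^i))) * (2^(k + i*m) + m))
    (a b r : ℕ) (hb : 1 ≤ b) (hr : 1 ≤ r) (hab : a = 2^r * b) :
    ∃ C : ℕ, ∀ c : ℤ, ∀ I : ℕ,
      (∑ i ∈ Finset.Icc 1 I, ∑ m ∈ Finset.Icc 1 (Mblk g i),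
        ((blk i m ×ˢ blk i m).filter
          (fun p => p.1 + r ≠ p.2 ∧ (a : ℤ) * n p.1 - (b : ℤ) * n p.2 = c)).card) ≤ C := by
  subst hab
  have hpair {i m k ℓ : ℕ} (hi : r + 2 ≤ i) (hm : m ∈ Finset.Icc 1 (Mblk g i))
      (hk : k ∈ blk i m) (hℓ : ℓ ∈ blk i m) (hne : k + r ≠ ℓ) : IsLargeBlockPair r i m k ℓ :=
    .of_mem (fun N hN => (hg_bounds N hN).2) hi hm (fun k hk => (hcover i k).mpr ⟨m, hm, hk⟩)
      hk hℓ hne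
  refine ⟨∑ i ∈ Finset.range (r + 2), ∑ m ∈ Finset.Icc 1 (Mblk g i),
    (blk i m ×ˢ blk i m).card + 1, fun c I => ?_⟩
  rw [← Finset.sum_filter_add_sum_filter_not _ (· < r + 2)]
  refine add_le_add ?_ ?_
  · refine (Finset.sum_le_sum fun i _ => Finset.sum_le_sum fun m _ =>
      Finset.card_filter_le _ _).trans (Finset.sum_le_sum_of_subset fun i hi => ?_)
    simp only [Finset.mem_filter, Finset.mem_range] at hi ⊢
    exact hi.2
  · rw [Finset.sum_congr rfl fun i _ => (Finset.card_sigma _ _).symm, ← Finset.card_sigma]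
    refine Finset.card_le_one.mpr ?_
    rintro ⟨i, m, k, ℓ⟩ hx ⟨i', m', k', ℓ'⟩ hy
    simp only [Finset.mem_sigma, Finset.mem_filter, Finset.mem_product, not_lt] at hx hy
    obtain ⟨⟨-, hi⟩, hm, ⟨hk, hℓ⟩, hne, hc⟩ := hx
    obtain ⟨⟨-, hi'⟩, hm', ⟨hk', hℓ'⟩, hne', hc'⟩ := hy
    rw [hn i m hm k hk, hn i m hm ℓ hℓ] at hc
    rw [hn i' m' hm' k' hk', hn i' m' hm' ℓ' hℓ'] at hc'
    obtain ⟨rfl, rfl, rfl, rfl⟩ := (hpair hi hm hk hℓ hne).eq_of_mul_nBlock_sub_eq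
      (by omega) (by omega) (hpair hi' hm' hk' hℓ' hne') (hc.trans hc'.symm)
    rfl

theorem statement13
    (g : ℕ → ℝ)
    (hg_bounds : ∀ N : ℕ, 1 ≤ N → 1 ≤ g N ∧ g N ≤ N)
    (hg_mono : ∀ N : ℕ, 1 ≤ N → g N ≤ g (N+1))
    (hg_ratio_mono : ∀ N : ℕ, 1 ≤ N → (N : ℝ) / g N ≤ ((N:ℝ)+1) / g (N+1))
    (hg_top : Tendsto g atTop atTop)
    (hg_ratio_top : Tendsto (fun N : ℕ => (N : ℝ) / g N) atTop atTop)
    (blk : ℕ → ℕ → Finset ℕ)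
    (hcover : ∀ i k, k ∈ Blk i ↔ ∃ m, m ∈ Finset.Icc 1 (Mblk g i) ∧ k ∈ blk i m)
    (hdisj : ∀ i m m', m ≠ m' → Disjoint (blk i m) (blk i m'))
    (hconsec : ∀ i m m', m < m' → ∀ k ∈ blk i m, ∀ k' ∈ blk i m', k < k')
    (hcard : ∀ i, ∀ m ∈ Finset.Icc 1 (Mblk g i), ∀ m' ∈ Finset.Icc 1 (Mblk g i),
      (blk i m).card ≤ (blk i m').card + 1)
    (n : ℕ → ℕ)
    (hn : ∀ i, ∀ m ∈ Finset.Icc 1 (Mblk g i), ∀ k ∈ blk i m,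
      n k = 2^(2^(2^(2^i))) * (2^(k + i*m) + m))
    (a b r : ℕ) (hb : 1 ≤ b) (hr : 1 ≤ r) (hab : a = 2^r * b) :
    ∃ C : ℕ, ∀ c : ℤ, ∀ I : ℕ,
      (∑ i ∈ Finset.Icc 1 I, ∑ m ∈ Finset.Icc 1 (Mblk g i),
        ((blk i m ×ˢ blk i m).filter
          (fun p => p.1 + r ≠ p.2 ∧ (a : ℤ) * n p.1 - (b : ℤ) * n p.2 = c)).card) ≤ C :=
  statement13_general g hg_bounds blk hcover n hn a b r hb hr hab
end

section
/- Let (n_k)_{k≥1} be a lacunary sequence of positive integers with growth factor q > 1. For large N, partition {1,…,N} into consecutive alternating blocks Δ_1, Δ_1', Δ_2, Δ_2', …, Δ_n, Δ_n' with #Δ_i = (log N)^5 and #Δ_i' = 6·log_q N for each i. Then for all sufficiently large N (depending on q) and all real λ with |λ| ≤ 1/(6 log_q N): ∫₀¹ exp(λ·Σ_{i=1}^n Σ_{k ∈ Δ_i'} cos(2π n_k x)) dx ≤ exp((λ²/2)·Σ_{i=1}^n #Δ_i'). -/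
/-!
Since `exp t ≤ 1 + t + t²` for `t ≤ 9/8` and `|λ| · #Δᵢ' ≤ 9/8`, the integrand is bounded by
`∏ᵢ (1 + λTᵢ + λ²Tᵢ²)`, where `Tᵢ` is the cosine sum over the dashed block `Δᵢ'`. The undashed
block of length `(log N)⁵` in front of `Δᵢ'` multiplies the frequencies by `q^((log N)⁵) ≫ N`, so
all frequencies of `Δᵢ'` and all their pairwise differences exceed the largest frequency occurring
in the product over the earlier blocks. By orthogonality, multiplying by the `i`-th factor then
multiplies the integral over `[0, 1]` by exactly the mean `1 + λ²#Δᵢ'/2 ≤ exp (λ²#Δᵢ'/2)` of that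
factor.
-/

open MeasureTheory Filter Real Finset

lemma integral_cos_two_pi_int_mul {a : ℤ} (ha : a ≠ 0) :
    ∫ x in (0:ℝ)..1, cos (2 * π * a * x) = 0 := by
  have h : (2 * π * a : ℝ) ≠ 0 := by simp [pi_ne_zero, ha]
  rw [intervalIntegral.integral_comp_mul_left (fun x => cos x) h, integral_cos, mul_one, mul_zero,
    sin_zero, sub_zero, show (2 * π * a : ℝ) = (2 * a : ℤ) * π by push_cast; ring,
    sin_int_mul_pi, smul_zero]

lemma intervalIntegrable_mul_cos {P : ℝ → ℝ} (hP : Continuous P) (a : ℝ) :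
    IntervalIntegrable (fun x => P x * cos (2 * π * a * x)) volume 0 1 :=
  (hP.mul (by fun_prop)).intervalIntegrable 0 1

lemma integral_mul_cos_mul_cos {P : ℝ → ℝ} (hP : Continuous P) (a b : ℝ) :
    ∫ x in (0:ℝ)..1, P x * cos (2 * π * a * x) * cos (2 * π * b * x) =
      ((∫ x in (0:ℝ)..1, P x * cos (2 * π * (a + b) * x)) +
        ∫ x in (0:ℝ)..1, P x * cos (2 * π * (a - b) * x)) / 2 := by
  rw [← intervalIntegral.integral_add (intervalIntegrable_mul_cos hP _)
    (intervalIntegrable_mul_cos hP _), ← intervalIntegral.integral_div]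
  congr 1 with x
  rw [show 2 * π * (a + b) * x = 2 * π * a * x + 2 * π * b * x by ring,
    show 2 * π * (a - b) * x = 2 * π * a * x - 2 * π * b * x by ring, cos_add, cos_sub]
  ring

def lowFreq (B : ℝ) : Submodule ℝ (ℝ → ℝ) where
  carrier := {f | Continuous f ∧
    ∀ a : ℤ, B < |(a : ℝ)| → ∫ x in (0:ℝ)..1, f x * cos (2 * π * a * x) = 0}
  add_mem' := by
    rintro f g ⟨hf, hf'⟩ ⟨hg, hg'⟩
    refine ⟨hf.add hg, fun a ha => ?_⟩
    simp only [Pi.add_apply, add_mul]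
    rw [intervalIntegral.integral_add (intervalIntegrable_mul_cos hf _)
      (intervalIntegrable_mul_cos hg _), hf' a ha, hg' a ha, add_zero]
  zero_mem' := ⟨continuous_const, fun a _ => by simp⟩
  smul_mem' := by
    rintro c f ⟨hf, hf'⟩
    refine ⟨hf.const_smul c, fun a ha => ?_⟩
    simp only [Pi.smul_apply, smul_eq_mul, mul_assoc c, intervalIntegral.integral_const_mul,
      hf' a ha, mul_zero]

namespace lowFreq

variable {B : ℝ} {f : ℝ → ℝ}

lemma continuous_of_mem (hf : f ∈ lowFreq B) : Continuous f := hf.1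

lemma integral_mul_cos_eq_zero (hf : f ∈ lowFreq B) {a : ℤ} (ha : B < |(a : ℝ)|) :
    ∫ x in (0:ℝ)..1, f x * cos (2 * π * a * x) = 0 := hf.2 a ha

lemma integral_mul_cos_natCast_eq_zero (hf : f ∈ lowFreq B) {a : ℕ} (ha : B < a) :
    ∫ x in (0:ℝ)..1, f x * cos (2 * π * a * x) = 0 := by
  simpa using integral_mul_cos_eq_zero hf (a := a) (by simpa using ha)

lemma mono : Monotone lowFreq := fun _ _ hBB' _ hf =>
  ⟨hf.1, fun a ha => hf.2 a (hBB'.trans_lt ha)⟩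

lemma one_mem : (fun _ => 1 : ℝ → ℝ) ∈ lowFreq 0 := by
  refine ⟨continuous_const, fun a ha => ?_⟩
  simpa using integral_cos_two_pi_int_mul (a := a) (by rintro rfl; simp at ha)

lemma mul_cos_mem (hf : f ∈ lowFreq B) (b : ℤ) :
    (fun x => f x * cos (2 * π * b * x)) ∈ lowFreq (B + |(b : ℝ)|) := by
  refine ⟨(continuous_of_mem hf).mul (by fun_prop), fun a ha => ?_⟩
  have hadd : B < |(b + a : ℝ)| := by
    have h := abs_sub_abs_le_abs_sub (a : ℝ) (-b)
    rw [sub_neg_eq_add, abs_neg, add_comm] at h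
    linarith
  have hsub : B < |(b - a : ℝ)| := by
    linarith [abs_sub_abs_le_abs_sub (a : ℝ) b, abs_sub_comm (a : ℝ) b]
  have h1 := integral_mul_cos_eq_zero hf (a := b + a) (by push_cast; exact hadd)
  have h2 := integral_mul_cos_eq_zero hf (a := b - a) (by push_cast; exact hsub)
  push_cast at h1 h2
  rw [integral_mul_cos_mul_cos (continuous_of_mem hf), h1, h2, add_zero, zero_div]

end lowFreq

lemma exp_le_one_add_add_sq {t : ℝ} (ht : t ≤ 9 / 8) : exp t ≤ 1 + t + t ^ 2 := by
  have hquad : ∀ s : ℝ, |s| ≤ 1 → exp s ≤ 1 + s + s ^ 2 := fun s hs => by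
    linarith [(abs_le.1 (abs_exp_sub_one_sub_id_le hs)).2]
  rcases le_or_gt t (-1) with h | h
  · nlinarith [exp_le_one_iff.2 (h.trans (by norm_num : (-1 : ℝ) ≤ 0))]
  rcases le_or_gt t 1 with h' | h'
  · exact hquad t (abs_le.2 ⟨h.le, h'⟩)
  have hs := hquad (t - 1) (abs_le.2 ⟨by linarith, by linarith⟩)
  have he := exp_one_lt_d9
  rw [show t = 1 + (t - 1) by ring, exp_add]
  nlinarith [exp_pos (t - 1)]

section CosSum

variable {ι : Type*}

noncomputable def cosSum (n : ι → ℕ) (s : Finset ι) (x : ℝ) : ℝ := ∑ k ∈ s, cos (2 * π * n k * x)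

lemma abs_cosSum_le (n : ι → ℕ) (s : Finset ι) (x : ℝ) : |cosSum n s x| ≤ #s :=
  (abs_sum_le_sum_abs _ _).trans <| by
    simpa using sum_le_sum fun k _ => abs_cos_le_one (2 * π * n k * x)

@[fun_prop]
lemma continuous_cosSum (n : ι → ℕ) (s : Finset ι) : Continuous (cosSum n s) := by
  unfold cosSum; fun_prop

noncomputable def expMajorant (lam : ℝ) (n : ι → ℕ) (s : Finset ι) (x : ℝ) : ℝ :=
  1 + lam * cosSum n s x + (lam * cosSum n s x) ^ 2

lemma exp_le_expMajorant {lam : ℝ} {n : ι → ℕ} {s : Finset ι} (h : |lam| * #s ≤ 9 / 8) (x : ℝ) :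
    exp (lam * cosSum n s x) ≤ expMajorant lam n s x := by
  refine exp_le_one_add_add_sq ((le_abs_self _).trans ?_)
  rw [abs_mul]
  exact (mul_le_mul_of_nonneg_left (abs_cosSum_le n s x) (abs_nonneg lam)).trans h

def SeparatedAbove (B : ℝ) (n : ι → ℕ) (s : Finset ι) : Prop :=
  (∀ k ∈ s, B < n k) ∧ ∀ j ∈ s, ∀ k ∈ s, j ≠ k → B < |(n j : ℝ) - n k|

lemma mul_expMajorant (P : ℝ → ℝ) (n : ι → ℕ) (s : Finset ι) (lam x : ℝ) :
    P x * expMajorant lam n s x =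
      P x + lam * ∑ k ∈ s, P x * cos (2 * π * n k * x) +
        lam ^ 2 * ∑ j ∈ s, ∑ k ∈ s, P x * cos (2 * π * n j * x) * cos (2 * π * n k * x) := by
  calc _ = P x + lam * (P x * cosSum n s x) + lam ^ 2 * (P x * (cosSum n s x * cosSum n s x)) := by
        rw [expMajorant]; ring
    _ = _ := by
      unfold cosSum
      rw [sum_mul_sum]
      simp only [mul_sum, mul_assoc]

section Step

variable {B : ℝ} {P : ℝ → ℝ} {n : ι → ℕ} {s : Finset ι}

lemma integral_mul_cos_mul_cos_of_separatedAbove [DecidableEq ι] (hP : P ∈ lowFreq B)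
    (hs : SeparatedAbove B n s) {j k : ι} (hj : j ∈ s) (hk : k ∈ s) :
    ∫ x in (0:ℝ)..1, P x * cos (2 * π * n j * x) * cos (2 * π * n k * x) =
      if j = k then (∫ x in (0:ℝ)..1, P x) / 2 else 0 := by
  have hsum := lowFreq.integral_mul_cos_natCast_eq_zero hP (a := n j + n k) <| by
    push_cast
    linarith [hs.1 k hk, (n j).cast_nonneg (α := ℝ)]
  push_cast at hsum
  rw [integral_mul_cos_mul_cos (lowFreq.continuous_of_mem hP), hsum, zero_add]
  split_ifs with hjk
  · simp [hjk]
  · have hdiff := lowFreq.integral_mul_cos_eq_zero hP (a := (n j : ℤ) - n k) <| by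
      push_cast; exact hs.2 j hj k hk hjk
    push_cast at hdiff
    rw [hdiff, zero_div]

lemma integral_mul_expMajorant [DecidableEq ι] (hP : P ∈ lowFreq B)
    (hs : SeparatedAbove B n s) (lam : ℝ) :
    ∫ x in (0:ℝ)..1, P x * expMajorant lam n s x =
      (1 + lam ^ 2 * #s / 2) * ∫ x in (0:ℝ)..1, P x := by
  have hPc := lowFreq.continuous_of_mem hP
  calc _ = (∫ x in (0:ℝ)..1, P x) +
        lam * (∑ k ∈ s, ∫ x in (0:ℝ)..1, P x * cos (2 * π * n k * x)) +
        lam ^ 2 * ∑ j ∈ s, ∑ k ∈ s,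
          ∫ x in (0:ℝ)..1, P x * cos (2 * π * n j * x) * cos (2 * π * n k * x) := by
        simp_rw [mul_expMajorant]
        rw [intervalIntegral.integral_add ?_ ?_, intervalIntegral.integral_add ?_ ?_,
          intervalIntegral.integral_const_mul, intervalIntegral.integral_const_mul,
          intervalIntegral.integral_finsetSum ?_, intervalIntegral.integral_finsetSum ?_]
        · congr! 3 with j hj
          exact intervalIntegral.integral_finsetSum fun k _ =>
            Continuous.intervalIntegrable (by fun_prop) _ _
        all_goals first
          | exact Continuous.intervalIntegrable (by fun_prop) _ _
          | exact fun _ _ => Continuous.intervalIntegrable (by fun_prop) _ _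
    _ = (∫ x in (0:ℝ)..1, P x) + lam * 0 +
        lam ^ 2 * ∑ j ∈ s, ∑ k ∈ s, if j = k then (∫ x in (0:ℝ)..1, P x) / 2 else 0 := by
        rw [sum_eq_zero fun k hk => lowFreq.integral_mul_cos_natCast_eq_zero hP (hs.1 k hk),
          sum_congr rfl fun j hj => sum_congr rfl fun k hk =>
          integral_mul_cos_mul_cos_of_separatedAbove hP hs hj hk]
    _ = _ := by
        simp only [mul_zero, add_zero, sum_ite_eq, sum_ite_mem, inter_self, sum_const,
          nsmul_eq_mul]
        ring

lemma mul_expMajorant_mem (hP : P ∈ lowFreq B) {M : ℕ} (hM : ∀ k ∈ s, n k ≤ M) (lam : ℝ) :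
    (fun x => P x * expMajorant lam n s x) ∈ lowFreq (B + 2 * M) := by
  have hM' : ∀ k ∈ s, (n k : ℝ) ≤ M := fun k hk => by exact_mod_cast hM k hk
  have hcos : ∀ k, (fun x => P x * cos (2 * π * n k * x)) ∈ lowFreq (B + n k) := fun k => by
    simpa using lowFreq.mul_cos_mem hP (n k)
  have hcos2 : ∀ j k, (fun x => P x * cos (2 * π * n j * x) * cos (2 * π * n k * x)) ∈
      lowFreq (B + n j + n k) := fun j k => by
    simpa using lowFreq.mul_cos_mem (hcos j) (n k)
  have hexpand : (fun x => P x * expMajorant lam n s x) =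
      P + lam • ∑ k ∈ s, (fun x => P x * cos (2 * π * n k * x)) +
        lam ^ 2 • ∑ j ∈ s, ∑ k ∈ s,
          fun x => P x * cos (2 * π * n j * x) * cos (2 * π * n k * x) := by
    ext x
    simp [mul_expMajorant, Finset.sum_apply]
  rw [hexpand]
  refine add_mem (add_mem ?_ (Submodule.smul_mem _ _ (sum_mem fun k hk => ?_)))
    (Submodule.smul_mem _ _ (sum_mem fun j hj => sum_mem fun k hk => ?_))
  · exact lowFreq.mono (le_add_of_nonneg_right (by positivity)) hP
  · exact lowFreq.mono (by linarith [hM' k hk, (n k).cast_nonneg (α := ℝ)]) (hcos k)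
  · exact lowFreq.mono (by linarith [hM' k hk, hM' j hj]) (hcos2 j k)

end Step

section Blocks

variable [DecidableEq ι] (n : ι → ℕ) (blk : ℕ → Finset ι) (M : ℕ → ℕ) (lam : ℝ) {m : ℕ}

lemma prod_expMajorant_mem_and_integral_eq (hM : ∀ i < m, ∀ k ∈ blk i, n k ≤ M i)
    (hsep : ∀ i < m, SeparatedAbove (2 * ∑ l ∈ range i, (M l : ℝ)) n (blk i)) :
    (fun x => ∏ i ∈ range m, expMajorant lam n (blk i) x) ∈
        lowFreq (2 * ∑ l ∈ range m, (M l : ℝ)) ∧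
      ∫ x in (0:ℝ)..1, ∏ i ∈ range m, expMajorant lam n (blk i) x =
        ∏ i ∈ range m, (1 + lam ^ 2 * #(blk i) / 2) := by
  induction m with
  | zero => simpa using lowFreq.one_mem
  | succ m ih =>
    obtain ⟨hmem, hint⟩ := ih (fun i hi => hM i (by omega)) (fun i hi => hsep i (by omega))
    simp only [prod_range_succ, sum_range_succ]
    refine ⟨?_, ?_⟩
    · rw [mul_add]
      exact mul_expMajorant_mem hmem (hM m m.lt_add_one) lam
    · rw [integral_mul_expMajorant hmem (hsep m m.lt_add_one), hint, mul_comm]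

theorem integral_exp_mul_sum_cosSum_le (hM : ∀ i < m, ∀ k ∈ blk i, n k ≤ M i)
    (hsep : ∀ i < m, SeparatedAbove (2 * ∑ l ∈ range i, (M l : ℝ)) n (blk i))
    (hlam : ∀ i < m, |lam| * #(blk i) ≤ 9 / 8) :
    ∫ x in (0:ℝ)..1, exp (lam * ∑ i ∈ range m, cosSum n (blk i) x) ≤
      exp (lam ^ 2 / 2 * ∑ i ∈ range m, (#(blk i) : ℝ)) := by
  obtain ⟨hmem, hint⟩ := prod_expMajorant_mem_and_integral_eq n blk M lam hM hsep
  have hpointwise : ∀ x, exp (lam * ∑ i ∈ range m, cosSum n (blk i) x) ≤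
      ∏ i ∈ range m, expMajorant lam n (blk i) x := fun x => by
    rw [mul_sum, exp_sum]
    exact prod_le_prod (fun i _ => (exp_pos _).le) fun i hi =>
      exp_le_expMajorant (hlam i (mem_range.1 hi)) x
  calc _ ≤ ∫ x in (0:ℝ)..1, ∏ i ∈ range m, expMajorant lam n (blk i) x :=
        intervalIntegral.integral_mono_on zero_le_one
          (Continuous.intervalIntegrable (by fun_prop) _ _) ((lowFreq.continuous_of_mem hmem).intervalIntegrable _ _) fun x _ => hpointwise x
    _ = ∏ i ∈ range m, (1 + lam ^ 2 * #(blk i) / 2) := hint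
    _ ≤ ∏ i ∈ range m, exp (lam ^ 2 / 2 * #(blk i)) :=
        prod_le_prod (fun i _ => by positivity) fun i _ => by
          linarith [add_one_le_exp (lam ^ 2 / 2 * #(blk i))]
    _ = _ := by rw [← exp_sum, mul_sum]

end Blocks

end CosSum

def IsLacunary (q : ℝ) (n : ℕ → ℕ) : Prop := ∀ k, 1 ≤ k → q * (n k : ℝ) ≤ n (k + 1)

namespace IsLacunary

variable {q : ℝ} {n : ℕ → ℕ}

lemma pow_mul_le (h : IsLacunary q n) (hq : 0 ≤ q) {j : ℕ} (hj : 1 ≤ j) (d : ℕ) :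
    q ^ d * n j ≤ n (j + d) := by
  induction d with
  | zero => simp
  | succ d ih =>
    calc q ^ (d + 1) * n j = q * (q ^ d * n j) := by ring
      _ ≤ q * n (j + d) := mul_le_mul_of_nonneg_left ih hq
      _ ≤ n (j + d + 1) := h (j + d) (by omega)

lemma natCast_le (h : IsLacunary q n) (hq : 1 ≤ q) {j k : ℕ} (hj : 1 ≤ j) (hjk : j ≤ k) :
    (n j : ℝ) ≤ n k := by
  obtain ⟨d, rfl⟩ := Nat.exists_eq_add_of_le hjk
  calc (n j : ℝ) ≤ q ^ d * n j := le_mul_of_one_le_left (by positivity) (one_le_pow₀ hq)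
    _ ≤ n (j + d) := h.pow_mul_le (by linarith) hj d

lemma sub_one_mul_le_sub (h : IsLacunary q n) (hq : 1 ≤ q) {j k : ℕ} (hj : 1 ≤ j)
    (hjk : j < k) : (q - 1) * n j ≤ n k - n j := by
  linarith [h j hj, h.natCast_le hq (by omega : 1 ≤ j + 1) hjk]

end IsLacunary

-- `dashedBlock D D' i` is the paper's `Δ'_{i+1}`: blocks are indexed from `0` here.
def dashedBlock (D D' i : ℕ) : Finset ℕ := Icc (i * (D + D') + D + 1) ((i + 1) * (D + D'))

lemma card_dashedBlock (D D' i : ℕ) : #(dashedBlock D D' i) = D' := by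
  rw [dashedBlock, Nat.card_Icc, add_mul, one_mul]
  omega

lemma IsLacunary.separatedAbove_dashedBlock {q : ℝ} {n : ℕ → ℕ} (h : IsLacunary q n)
    (hq : 1 < q) (hn : ∀ k, 0 < n k) {D : ℕ} (hD : 1 ≤ D) (D' : ℕ) {i : ℕ}
    (hi : (2 * i : ℝ) < (q - 1) * q ^ D) :
    SeparatedAbove (2 * ∑ l ∈ range i, (n ((l + 1) * (D + D')) : ℝ)) n (dashedBlock D D' i) := by
  set B := 2 * ∑ l ∈ range i, (n ((l + 1) * (D + D')) : ℝ) with hB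
  have hnpos : ∀ k, (0 : ℝ) < n k := fun k => by exact_mod_cast hn k
  -- the undashed block of length `D` before `dashedBlock D D' i` makes all gaps grow by `q ^ D`
  have hgap : ∀ b, i * (D + D') + D ≤ b → B < (q - 1) * n b := by
    intro b hb
    rcases i.eq_zero_or_pos with rfl | hi0
    · simpa [hB] using mul_pos (sub_pos.2 hq) (hnpos b)
    set a := i * (D + D')
    have ha : 1 ≤ a := Nat.mul_pos hi0 (by omega)
    calc B ≤ 2 * ∑ _l ∈ range i, (n a : ℝ) := by
          rw [hB]
          gcongr with l hl
          exact_mod_cast h.natCast_le hq.le (j := (l + 1) * (D + D')) (k := a)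
            (Nat.mul_pos l.succ_pos (by omega)) (Nat.mul_le_mul_right _ (mem_range.1 hl))
      _ = 2 * i * n a := by simp only [sum_const, card_range, nsmul_eq_mul]; ring
      _ < (q - 1) * q ^ D * n a := by gcongr; exact hnpos a
      _ ≤ (q - 1) * q ^ (b - a) * n a := by
          gcongr
          exacts [hq.le, by omega]
      _ ≤ (q - 1) * n b := by
          rw [mul_assoc]
          refine mul_le_mul_of_nonneg_left ?_ (sub_nonneg.2 hq.le)
          simpa [Nat.add_sub_cancel' (show a ≤ b by omega)] using
            h.pow_mul_le (by linarith) ha (b - a)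
  have hdiff : ∀ j ∈ dashedBlock D D' i, ∀ k, j < k → B < n k - n j := fun j hj k hjk => by
    have := (mem_Icc.1 hj).1
    linarith [hgap j (by omega), h.sub_one_mul_le_sub hq.le (by omega) hjk]
  refine ⟨fun k hk => ?_, fun j hj k hk hjk => ?_⟩
  · have := (mem_Icc.1 hk).1
    linarith [hgap (k - 1) (by omega), hnpos (k - 1),
      h.sub_one_mul_le_sub hq.le (j := k - 1) (k := k) (by omega) (by omega)]
  · rcases hjk.lt_or_gt with hlt | hlt
    · exact lt_abs.2 (Or.inr (by linarith [hdiff j hj k hlt]))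
    · exact lt_abs.2 (Or.inl (hdiff k hk j hlt))

lemma sum_range_cosSum_dashedBlock (n : ℕ → ℕ) (D D' nb : ℕ) (x : ℝ) :
    ∑ i ∈ range nb, cosSum n (dashedBlock D D' i) x =
      ∑ i ∈ Icc 1 nb, ∑ k ∈ Icc ((i - 1) * (D + D') + D + 1) (i * (D + D')),
        cos (2 * π * n k * x) := by
  rw [range_eq_Ico, ← Ico_add_one_right_eq_Icc, ← sum_Ico_add' _ 0 nb 1]
  simp [cosSum, dashedBlock]

lemma eventually_two_mul_lt_sub_one_mul_pow {q : ℝ} (hq : 1 < q) :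
    ∀ᶠ N : ℕ in atTop, (2 * N : ℝ) < (q - 1) * q ^ ⌈log N ^ 5⌉₊ := by
  set c := log q
  set d := log 2 - log (q - 1)
  have hc : 0 < c := log_pos hq
  filter_upwards [(tendsto_log_atTop.comp tendsto_natCast_atTop_atTop).eventually_ge_atTop
    (max 1 ((2 + |d|) / c)), eventually_gt_atTop 0] with N hx hN
  set x := log N
  have hx1 : 1 ≤ x := le_of_max_le_left hx
  have hcx : 2 + |d| ≤ c * x := by
    have := le_of_max_le_right hx
    rwa [div_le_iff₀ hc, mul_comm] at this
  have hpoly : log 2 + x < log (q - 1) + x ^ 5 * c := by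
    have hx4 : x ≤ x ^ 4 := le_self_pow₀ hx1 (by norm_num)
    calc log 2 + x = log (q - 1) + (x + d) := by ring
      _ < log (q - 1) + (2 + |d|) * x := by nlinarith [le_abs_self d, abs_nonneg d]
      _ ≤ log (q - 1) + (2 + |d|) * x ^ 4 := by gcongr
      _ ≤ log (q - 1) + x ^ 5 * c := by nlinarith [pow_nonneg (by linarith : (0:ℝ) ≤ x) 4]
  calc (2 * N : ℝ) = exp (log 2 + x) := by
        rw [exp_add, exp_log two_pos, exp_log (by exact_mod_cast hN)]
    _ < exp (log (q - 1) + x ^ 5 * c) := exp_lt_exp.2 hpoly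
    _ ≤ exp (log (q - 1) + ⌈x ^ 5⌉₊ * c) := by gcongr; exact Nat.le_ceil _
    _ = (q - 1) * q ^ ⌈x ^ 5⌉₊ := by
        rw [exp_add, exp_log (sub_pos.2 hq), exp_nat_mul, exp_log (by linarith)]

lemma abs_mul_ceil_le {q N lam : ℝ} (hq : 1 < q) (hN : 4 / 3 * log q ≤ log N)
    (hlam : |lam| ≤ log q / (6 * log N)) : |lam| * ⌈6 * log N / log q⌉₊ ≤ 9 / 8 := by
  have hlogq : 0 < log q := log_pos hq
  have hlogN : 0 < log N := by linarith
  calc |lam| * ⌈6 * log N / log q⌉₊ ≤ log q / (6 * log N) * (6 * log N / log q + 1) := by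
        gcongr
        exact (Nat.ceil_lt_add_one (by positivity)).le
    _ = 1 + log q / (6 * log N) := by field_simp
    _ ≤ 9 / 8 := by
        have : log q / (6 * log N) ≤ 1 / 8 := by rw [div_le_iff₀ (by positivity)]; linarith
        linarith

theorem statement15 (q : ℝ) (hq : 1 < q) :
    ∃ N₀ : ℕ, ∀ N : ℕ, N₀ ≤ N →
      ∀ n : ℕ → ℕ, (∀ k, 1 ≤ n k) →
        (∀ k, 1 ≤ k → q * (n k : ℝ) ≤ (n (k+1) : ℝ)) →
      -- D = #Δ_i = (log N)^5 and D' = #Δ_i' = 6·log_q N (as integers),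
      -- nb = number of blocks, with {1,…,N} partitioned into alternating
      -- consecutive blocks Δ_1, Δ_1', …, Δ_nb, Δ_nb' of lengths D and D';
      -- the i-th dashed block Δ_i' is {(i−1)(D+D') + D + 1, …, i(D+D')}
      ∀ D D' nb : ℕ,
        D = ⌈(Real.log N) ^ 5⌉₊ →
        D' = ⌈6 * Real.log N / Real.log q⌉₊ →
        N = nb * (D + D') →
      ∀ lam : ℝ, |lam| ≤ Real.log q / (6 * Real.log N) →
        (∫ x in (0:ℝ)..1, Real.exp (lam *
          ∑ i ∈ Finset.Icc 1 nb,
            ∑ k ∈ Finset.Icc ((i-1)*(D+D') + D + 1) (i*(D+D')),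
              Real.cos (2 * Real.pi * (n k : ℝ) * x)))
          ≤ Real.exp (lam ^ 2 / 2 * (nb * D' : ℕ)) := by
  obtain ⟨N₀, hN₀⟩ := eventually_atTop.1 <| (eventually_two_mul_lt_sub_one_mul_pow hq).and <|
    (tendsto_log_atTop.comp tendsto_natCast_atTop_atTop).eventually_ge_atTop (4 / 3 * log q)
  refine ⟨N₀, fun N hN n hn hlac D D' nb hD hD' hNnb lam hlam => ?_⟩
  replace hlac : IsLacunary q n := hlac
  obtain ⟨hpow, hlogN⟩ := hN₀ N hN
  replace hlogN : 4 / 3 * log q ≤ log N := hlogN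
  have hD1 : 1 ≤ D := hD ▸ Nat.one_le_ceil_iff.2 (pow_pos (by linarith [log_pos hq]) 5)
  have hnbN : (nb : ℝ) ≤ N := by
    exact_mod_cast hNnb ▸ Nat.le_mul_of_pos_right nb (by omega)
  calc _ = ∫ x in (0:ℝ)..1, exp (lam * ∑ i ∈ range nb, cosSum n (dashedBlock D D' i) x) := by
        simp only [sum_range_cosSum_dashedBlock]
    _ ≤ exp (lam ^ 2 / 2 * ∑ i ∈ range nb, (#(dashedBlock D D' i) : ℝ)) :=
        integral_exp_mul_sum_cosSum_le n (dashedBlock D D') (fun i => n ((i + 1) * (D + D'))) lam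
          (fun i _ k hk => by
            have := mem_Icc.1 hk
            exact_mod_cast hlac.natCast_le hq.le (by omega) this.2)
          (fun i hi => hlac.separatedAbove_dashedBlock hq hn hD1 D' <| by
            have : (i : ℝ) < nb := by exact_mod_cast hi
            rw [hD]
            linarith)
          (fun i _ => by rw [card_dashedBlock, hD']; exact abs_mul_ceil_le hq hlogN hlam)
    _ = _ := by simp [card_dashedBlock, mul_comm]
end
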